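/- arXiv:2311.08384 — 2 statements merged into one kernel-verified Lean document; each statement's English description precedes it below -/
import Mathlib

section
/- Cumulative suboptimality of hybrid actor-critic under offline transfer (deterministic form of the Bellman-complete case of Theorem 4.5): Let |A| = A ≥ 2, T ≥ 4·log(A), η = (1−γ)·√(log(A)/T), and let ν be a probability distribution on S×A. Let f^1, …, f^T : S×A → [0, 1/(1−γ)], and let the policies π^1, …, π^T be generated by π^1(·|s) uniform on A and π^{t+1}(a|s) = π^t(a|s)·exp(η f^t(s,a)) / Σ_{a'} π^t(a'|s)·exp(η f^t(s,a')). Suppose for every t: (i) E_{d^{π^t}}[(f^t − Q^{π^t})²] ≤ Δ_on; (ii) E_{ν}[(f^t − T^{π^t} f^t)²] ≤ Δ_off; and (iii) for the comparator policy π^e, E_{(s,a)∼d^{π^e}}[(T^{π^t} f^t)(s,a) − f^t(s,a)] ≤ C·√(E_{ν}[(T^{π^t} f^t − f^t)²]) with C ≥ 0. Then Σ_{t=1}^T (V^{π^e} − V^{π^t}) ≤ T·√(Δ_on/(1−γ)) + (C·T/(1−γ))·√(Δ_off) + (2/(1−γ)²)·√(log(A)·T). -/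
open Finset

structure FinMDP (S A : Type*) [Fintype S] [Fintype A] where
  P : S → A → S → ℝ
  P_nonneg : ∀ s a s', 0 ≤ P s a s'
  P_sum : ∀ s a, ∑ s', P s a s' = 1
  r : S → A → ℝ
  r_nonneg : ∀ s a, 0 ≤ r s a
  r_le_one : ∀ s a, r s a ≤ 1
  disc : ℝ
  disc_pos : 0 < disc
  disc_lt_one : disc < 1
  init : S → ℝ
  init_nonneg : ∀ s, 0 ≤ init s
  init_sum : ∑ s, init s = 1

variable {S A : Type*} [Fintype S] [Fintype A] [Nonempty S] [Nonempty A]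

/-- A policy assigns to each state a probability mass function over actions. -/
def IsPolicy (π : S → A → ℝ) : Prop :=
  (∀ s a, 0 ≤ π s a) ∧ ∀ s, ∑ a, π s a = 1

/-- The Bellman operator `T^π`. -/
noncomputable def FinMDP.bellman (M : FinMDP S A) (π f : S → A → ℝ) (s : S) (a : A) : ℝ :=
  M.r s a + M.disc * ∑ s', M.P s a s' * ∑ a', π s' a' * f s' a'

/-- `Q` is the action-value function of `π`, i.e. satisfies the Bellman equation. -/
def FinMDP.IsQ (M : FinMDP S A) (π Q : S → A → ℝ) : Prop :=
  ∀ s a, Q s a = M.bellman π Q s a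

/-- The state value `V^π(s)` induced by a `Q`-function. -/
noncomputable def vOf (π Q : S → A → ℝ) (s : S) : ℝ := ∑ a, π s a * Q s a

/-- The scalar value `V^π = E_{s ∼ μ₀}[V^π(s)]`. -/
noncomputable def FinMDP.scalarV (M : FinMDP S A) (π Q : S → A → ℝ) : ℝ :=
  ∑ s, M.init s * vOf π Q s

/-- Distribution of the state at time `t` under policy `π`. -/
noncomputable def FinMDP.stateDist (M : FinMDP S A) (π : S → A → ℝ) : ℕ → S → ℝ
  | 0 => M.init
  | (t + 1) => fun s' => ∑ s, ∑ a, FinMDP.stateDist M π t s * π s a * M.P s a s'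

/-- The discounted occupancy measure `d^π(s,a) = (1-γ) ∑_t γ^t Pr^π(s_t = s, a_t = a)`. -/
noncomputable def FinMDP.occ (M : FinMDP S A) (π : S → A → ℝ) (s : S) (a : A) : ℝ :=
  (1 - M.disc) * ∑' t : ℕ, M.disc ^ t * M.stateDist π t s * π s a

/-!
In round `t` the performance difference lemma, evaluated at the critic `f^t`, splits
`V^{π^e} - V^{π^t}` into three parts: the `d^{π^e}`-average of the Bellman residual
`T^{π^t} f^t - f^t`, which the transfer and offline hypotheses bound by `C √Δ_off`; the
average over the state occupancy of `π^e` of `⟨π^e(·|s) - π^t(·|s), f^t(s, ·)⟩`; and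
`E_{μ₀}[⟨π^t, f^t⟩] - V^{π^t}`, which is at most `√(Δ_on / (1-γ))` by Jensen's inequality and
`d^π ≥ (1-γ) μ₀ π`. Summed over `t`, the middle part is, state by state, the regret of the Hedge
algorithm with gains `f^t(s, ·) ∈ [0, 1/(1-γ)]`, at most `log A / η + η T / (1-γ)²`; the choice of
`η` balances the two terms. All occupancy identities come from the flow equation
`d_S(s') = (1-γ) μ₀(s') + γ ∑_{s,a} d_S(s) π(a|s) P(s'|s,a)`.
-/

lemma log_sum_mul_exp_le {ι : Type*} {s : Finset ι} {q x : ι → ℝ} (hq0 : ∀ i ∈ s, 0 ≤ q i)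
    (hq1 : ∑ i ∈ s, q i = 1) (hx : ∀ i ∈ s, |x i| ≤ 1) :
    Real.log (∑ i ∈ s, q i * Real.exp (x i)) ≤ ∑ i ∈ s, q i * x i + ∑ i ∈ s, q i * x i ^ 2 := by
  have hexp : ∀ i ∈ s, q i * Real.exp (x i) ≤ q i * (1 + x i + x i ^ 2) := fun i hi => by
    have := (abs_le.1 (Real.abs_exp_sub_one_sub_id_le (hx i hi))).2
    exact mul_le_mul_of_nonneg_left (by linarith) (hq0 i hi)
  have hpos : 0 < ∑ i ∈ s, q i * Real.exp (x i) := by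
    obtain ⟨i, hi, hqi⟩ := exists_lt_of_sum_lt (hq1 ▸ sum_const_zero.trans_lt one_pos :
      ∑ i ∈ s, (0 : ℝ) < ∑ i ∈ s, q i)
    exact sum_pos' (fun i hi => mul_nonneg (hq0 i hi) (Real.exp_pos _).le)
      ⟨i, hi, mul_pos hqi (Real.exp_pos _)⟩
  calc Real.log (∑ i ∈ s, q i * Real.exp (x i)) ≤ ∑ i ∈ s, q i * Real.exp (x i) - 1 :=
        Real.log_le_sub_one_of_pos hpos
    _ ≤ ∑ i ∈ s, q i * (1 + x i + x i ^ 2) - 1 := by linarith [sum_le_sum hexp]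
    _ = ∑ i ∈ s, q i * x i + ∑ i ∈ s, q i * x i ^ 2 := by
        simp only [mul_add, mul_one, sum_add_distrib, hq1]; ring

section Hedge

variable {η : ℝ} {F : ℕ → A → ℝ}

noncomputable def hedgeWeight (η : ℝ) (F : ℕ → A → ℝ) (t : ℕ) (a : A) : ℝ :=
  Real.exp (η * ∑ τ ∈ Ico 1 t, F τ a)

noncomputable def hedgePartition (η : ℝ) (F : ℕ → A → ℝ) (t : ℕ) : ℝ :=
  ∑ a, hedgeWeight η F t a

def IsHedge (η : ℝ) (F : ℕ → A → ℝ) (T : ℕ) (p : ℕ → A → ℝ) : Prop :=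
  (∀ a, p 1 a = 1 / Fintype.card A) ∧ ∀ t, 1 ≤ t → t < T → ∀ a,
    p (t + 1) a = p t a * Real.exp (η * F t a) / ∑ a', p t a' * Real.exp (η * F t a')

lemma hedgePartition_pos (t : ℕ) : 0 < hedgePartition η F t :=
  sum_pos (fun _ _ => Real.exp_pos _) univ_nonempty

omit [Fintype A] [Nonempty A] in
lemma hedgeWeight_succ {t : ℕ} (ht : 1 ≤ t) (a : A) :
    hedgeWeight η F (t + 1) a = hedgeWeight η F t a * Real.exp (η * F t a) := by
  rw [hedgeWeight, hedgeWeight, sum_Ico_succ_top ht, mul_add, Real.exp_add]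

omit [Nonempty A] in
lemma hedgePartition_one : hedgePartition η F 1 = Fintype.card A := by
  simp [hedgePartition, hedgeWeight]

lemma log_hedgePartition_succ_sub_le {B : ℝ} (hη : 0 ≤ η) (hηB : η * B ≤ 1) {t : ℕ}
    (ht : 1 ≤ t) (hF : ∀ a, F t a ∈ Set.Icc 0 B) :
    Real.log (hedgePartition η F (t + 1)) - Real.log (hedgePartition η F t)
      ≤ η * ∑ a, hedgeWeight η F t a / hedgePartition η F t * F t a + η ^ 2 * B ^ 2 := by
  set Z := hedgePartition η F t
  have hZ : 0 < Z := hedgePartition_pos t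
  have hq0 : ∀ a ∈ univ, 0 ≤ hedgeWeight η F t a / Z := fun a _ =>
    div_nonneg (Real.exp_pos _).le hZ.le
  have hq1 : ∑ a, hedgeWeight η F t a / Z = 1 := by rw [← sum_div]; exact div_self hZ.ne'
  have hηF : ∀ a, 0 ≤ η * F t a ∧ η * F t a ≤ 1 := fun a =>
    ⟨mul_nonneg hη (hF a).1, (mul_le_mul_of_nonneg_left (hF a).2 hη).trans hηB⟩
  have hratio : hedgePartition η F (t + 1) / Z
      = ∑ a, hedgeWeight η F t a / Z * Real.exp (η * F t a) := by
    simp_rw [hedgePartition, hedgeWeight_succ ht, sum_div, div_mul_eq_mul_div]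
  rw [← Real.log_div (hedgePartition_pos _).ne' hZ.ne', hratio]
  refine (log_sum_mul_exp_le hq0 hq1 fun a _ => abs_le.2 ⟨by linarith [hηF a], (hηF a).2⟩).trans ?_
  gcongr
  · rw [mul_sum]; exact le_of_eq (sum_congr rfl fun a _ => by ring)
  · calc ∑ a, hedgeWeight η F t a / Z * (η * F t a) ^ 2
          ≤ ∑ a, hedgeWeight η F t a / Z * (η * B) ^ 2 :=
          sum_le_sum fun a ha => mul_le_mul_of_nonneg_left
            (pow_le_pow_left₀ (hηF a).1 (mul_le_mul_of_nonneg_left (hF a).2 hη) 2) (hq0 a ha)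
      _ = η ^ 2 * B ^ 2 := by rw [← sum_mul, hq1, one_mul, mul_pow]

omit [Nonempty A] in
lemma mul_sum_le_log_hedgePartition {q : A → ℝ} (hq0 : ∀ a, 0 ≤ q a) (hq1 : ∑ a, q a = 1)
    (t : ℕ) : η * ∑ a, q a * ∑ τ ∈ Ico 1 t, F τ a ≤ Real.log (hedgePartition η F t) := by
  have hw : ∀ a, η * ∑ τ ∈ Ico 1 t, F τ a ≤ Real.log (hedgePartition η F t) := fun a => by
    rw [← Real.log_exp (η * _)]
    exact Real.log_le_log (Real.exp_pos _)
      (single_le_sum (f := hedgeWeight η F t) (fun _ _ => (Real.exp_pos _).le) (mem_univ a))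
  calc η * ∑ a, q a * ∑ τ ∈ Ico 1 t, F τ a = ∑ a, q a * (η * ∑ τ ∈ Ico 1 t, F τ a) := by
        rw [mul_sum]; exact sum_congr rfl fun a _ => by ring
    _ ≤ ∑ a, q a * Real.log (hedgePartition η F t) :=
        sum_le_sum fun a _ => mul_le_mul_of_nonneg_left (hw a) (hq0 a)
    _ = Real.log (hedgePartition η F t) := by rw [← sum_mul, hq1, one_mul]

namespace IsHedge

variable {p : ℕ → A → ℝ} {T : ℕ} (hp : IsHedge η F T p)
include hp

lemma eq_hedgeWeight_div {t : ℕ} (ht : 1 ≤ t) (htT : t ≤ T) (a : A) :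
    p t a = hedgeWeight η F t a / hedgePartition η F t := by
  induction t, ht using Nat.le_induction generalizing a with
  | base => rw [hp.1, hedgePartition_one, hedgeWeight, Ico_self, sum_empty, mul_zero, Real.exp_zero]
  | succ t ht ih =>
    simp_rw [hp.2 t ht htT, ih (by omega), div_mul_eq_mul_div, ← sum_div,
      div_div_div_cancel_right₀ (hedgePartition_pos t).ne', hedgePartition, hedgeWeight_succ ht]

lemma nonneg {t : ℕ} (ht : 1 ≤ t) (htT : t ≤ T) (a : A) : 0 ≤ p t a := by
  rw [hp.eq_hedgeWeight_div ht htT]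
  exact div_nonneg (Real.exp_pos _).le (hedgePartition_pos t).le

lemma sum_eq_one {t : ℕ} (ht : 1 ≤ t) (htT : t ≤ T) : ∑ a, p t a = 1 := by
  simp_rw [hp.eq_hedgeWeight_div ht htT, ← sum_div]
  exact div_self (hedgePartition_pos t).ne'

theorem regret_le {B : ℝ} (hη : 0 < η) (hηB : η * B ≤ 1)
    (hF : ∀ t ∈ Icc 1 T, ∀ a, F t a ∈ Set.Icc 0 B) {q : A → ℝ} (hq0 : ∀ a, 0 ≤ q a)
    (hq1 : ∑ a, q a = 1) :
    ∑ t ∈ Icc 1 T, (∑ a, q a * F t a - ∑ a, p t a * F t a)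
      ≤ Real.log (Fintype.card A) / η + η * T * B ^ 2 := by
  have hstep : ∀ t ∈ Icc 1 T,
      Real.log (hedgePartition η F (t + 1)) - Real.log (hedgePartition η F t)
        ≤ η * ∑ a, p t a * F t a + η ^ 2 * B ^ 2 := fun t ht => by
    obtain ⟨h1, hT⟩ := mem_Icc.1 ht
    simp_rw [hp.eq_hedgeWeight_div h1 hT]
    exact log_hedgePartition_succ_sub_le hη.le hηB h1 (hF t ht)
  have htel : ∑ t ∈ Icc 1 T,
      (Real.log (hedgePartition η F (t + 1)) - Real.log (hedgePartition η F t))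
        = Real.log (hedgePartition η F (T + 1)) - Real.log (Fintype.card A) := by
    rw [← Ico_add_one_right_eq_Icc,
      sum_Ico_sub (fun t => Real.log (hedgePartition η F t)) (by omega : 1 ≤ T + 1),
      hedgePartition_one]
  have hupper := sum_le_sum hstep
  rw [htel, sum_add_distrib, ← mul_sum, sum_const, Nat.card_Icc, add_tsub_cancel_right,
    nsmul_eq_mul] at hupper
  have hlower := mul_sum_le_log_hedgePartition (η := η) (F := F) hq0 hq1 (T + 1)
  simp_rw [Ico_add_one_right_eq_Icc, mul_sum (s := Icc 1 T)] at hlower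
  rw [sum_comm] at hlower
  rw [sum_sub_distrib, div_add' _ _ _ hη.ne', le_div_iff₀ hη]
  nlinarith

end IsHedge

end Hedge

namespace FinMDP

section Occupancy

omit [Nonempty S] [Nonempty A]

variable (M : FinMDP S A) {π : S → A → ℝ}

noncomputable def stateOcc (π : S → A → ℝ) (s : S) : ℝ :=
  (1 - M.disc) * ∑' t : ℕ, M.disc ^ t * M.stateDist π t s

lemma one_sub_disc_pos : 0 < 1 - M.disc := sub_pos.2 M.disc_lt_one

lemma occ_eq_stateOcc_mul (π : S → A → ℝ) (s : S) (a : A) :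
    M.occ π s a = M.stateOcc π s * π s a := by
  rw [occ, stateOcc, tsum_mul_right, mul_assoc]

lemma stateDist_nonneg (hπ : IsPolicy π) (t : ℕ) (s : S) : 0 ≤ M.stateDist π t s := by
  induction t generalizing s with
  | zero => exact M.init_nonneg s
  | succ t ih =>
    exact sum_nonneg fun s' _ => sum_nonneg fun a _ =>
      mul_nonneg (mul_nonneg (ih s') (hπ.1 s' a)) (M.P_nonneg s' a s)

lemma sum_transition_mul (π : S → A → ℝ) (w g : S → ℝ) :
    ∑ s', (∑ s, ∑ a, w s * π s a * M.P s a s') * g s'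
      = ∑ s, ∑ a, w s * π s a * ∑ s', M.P s a s' * g s' := by
  simp_rw [sum_mul, mul_sum, mul_assoc]
  rw [sum_comm]
  exact sum_congr rfl fun s _ => sum_comm

lemma sum_transition (hπ : IsPolicy π) (w : S → ℝ) :
    ∑ s', ∑ s, ∑ a, w s * π s a * M.P s a s' = ∑ s, w s := by
  simpa [M.P_sum, ← mul_sum, hπ.2] using M.sum_transition_mul π w 1

lemma sum_stateDist (hπ : IsPolicy π) (t : ℕ) : ∑ s, M.stateDist π t s = 1 := by
  induction t with
  | zero => exact M.init_sum
  | succ t ih => exact (M.sum_transition hπ _).trans ih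

lemma summable_disc_pow_mul_stateDist (hπ : IsPolicy π) (s : S) :
    Summable fun t => M.disc ^ t * M.stateDist π t s := by
  refine (summable_geometric_of_lt_one M.disc_pos.le M.disc_lt_one).of_nonneg_of_le
    (fun t => mul_nonneg (pow_nonneg M.disc_pos.le t) (M.stateDist_nonneg hπ t s)) fun t => ?_
  have : M.stateDist π t s ≤ 1 :=
    M.sum_stateDist hπ t ▸ single_le_sum (fun s _ => M.stateDist_nonneg hπ t s) (mem_univ s)
  exact mul_le_of_le_one_right (pow_nonneg M.disc_pos.le t) this

lemma stateOcc_nonneg (hπ : IsPolicy π) (s : S) : 0 ≤ M.stateOcc π s :=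
  mul_nonneg M.one_sub_disc_pos.le
    (tsum_nonneg fun t => mul_nonneg (pow_nonneg M.disc_pos.le t) (M.stateDist_nonneg hπ t s))

lemma stateOcc_eq (hπ : IsPolicy π) (s' : S) :
    M.stateOcc π s' =
      (1 - M.disc) * M.init s' + M.disc * ∑ s, ∑ a, M.stateOcc π s * π s a * M.P s a s' := by
  have hsum := M.summable_disc_pow_mul_stateDist hπ
  have hstep : ∀ t, M.disc ^ (t + 1) * M.stateDist π (t + 1) s' = ∑ s, ∑ a,
      M.disc * (M.disc ^ t * M.stateDist π t s) * (π s a * M.P s a s') := fun t => by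
    simp only [stateDist, mul_sum]
    exact sum_congr rfl fun s _ => sum_congr rfl fun a _ => by ring
  have hterm : ∀ s a, Summable fun t =>
      M.disc * (M.disc ^ t * M.stateDist π t s) * (π s a * M.P s a s') :=
    fun s a => ((hsum s).mul_left _).mul_right _
  rw [stateOcc, (hsum s').tsum_eq_zero_add, tsum_congr hstep,
    Summable.tsum_finsetSum fun s _ => summable_sum fun a _ => hterm s a]
  simp_rw [Summable.tsum_finsetSum fun a _ => hterm _ a, tsum_mul_right, tsum_mul_left]
  simp only [stateDist, stateOcc, pow_zero, one_mul, mul_add, mul_sum]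
  congr 1
  exact sum_congr rfl fun s _ => sum_congr rfl fun a _ => by ring

lemma sum_stateOcc (hπ : IsPolicy π) : ∑ s, M.stateOcc π s = 1 := by
  have h := sum_congr rfl fun s' (_ : s' ∈ univ) => M.stateOcc_eq hπ s'
  rw [sum_add_distrib, ← mul_sum, ← mul_sum, M.init_sum, M.sum_transition hπ] at h
  have := M.one_sub_disc_pos
  nlinarith

lemma sum_occ_mul (π h : S → A → ℝ) :
    ∑ s, ∑ a, M.occ π s a * h s a = ∑ s, M.stateOcc π s * vOf π h s := by
  simp_rw [vOf, mul_sum, occ_eq_stateOcc_mul, mul_assoc]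

lemma sum_occ_mul_disc_transition (hπ : IsPolicy π) (g : S → ℝ) :
    ∑ s, ∑ a, M.occ π s a * (M.disc * ∑ s', M.P s a s' * g s')
      = ∑ s, M.stateOcc π s * g s - (1 - M.disc) * ∑ s, M.init s * g s := by
  have hflow : ∑ s, M.stateOcc π s * g s = (1 - M.disc) * ∑ s, M.init s * g s
      + M.disc * ∑ s, ∑ a, M.stateOcc π s * π s a * ∑ s', M.P s a s' * g s' := by
    rw [← M.sum_transition_mul, mul_sum, mul_sum, ← sum_add_distrib]
    exact sum_congr rfl fun s' _ => by rw [M.stateOcc_eq hπ s']; ring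
  have hocc : ∑ s, ∑ a, M.occ π s a * (M.disc * ∑ s', M.P s a s' * g s')
      = M.disc * ∑ s, ∑ a, M.stateOcc π s * π s a * ∑ s', M.P s a s' * g s' := by
    simp_rw [mul_sum, occ_eq_stateOcc_mul]
    exact sum_congr rfl fun s _ => sum_congr rfl fun a _ => sum_congr rfl fun s' _ => by ring
  linarith

lemma sum_occ_bellman_sub (hπ : IsPolicy π) (ρ f : S → A → ℝ) :
    ∑ s, ∑ a, M.occ π s a * (M.bellman ρ f s a - f s a)
      = ∑ s, ∑ a, M.occ π s a * M.r s a + ∑ s, M.stateOcc π s * (vOf ρ f s - vOf π f s)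
        - (1 - M.disc) * ∑ s, M.init s * vOf ρ f s := by
  have hb : ∀ s a, M.bellman ρ f s a = M.r s a + M.disc * ∑ s', M.P s a s' * vOf ρ f s' :=
    fun _ _ => rfl
  simp only [hb, mul_add, mul_sub, sum_add_distrib, sum_sub_distrib,
    M.sum_occ_mul_disc_transition hπ, M.sum_occ_mul π f]
  ring

lemma sum_occ_mul_reward (hπ : IsPolicy π) {Q : S → A → ℝ} (hQ : M.IsQ π Q) :
    ∑ s, ∑ a, M.occ π s a * M.r s a = (1 - M.disc) * M.scalarV π Q := by
  have h := M.sum_occ_bellman_sub hπ π Q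
  simp only [← hQ _ _, sub_self, mul_zero, sum_const_zero] at h
  rw [scalarV]
  linarith

lemma performance_difference (hπ : IsPolicy π) {Q : S → A → ℝ} (hQ : M.IsQ π Q)
    (ρ f : S → A → ℝ) :
    (1 - M.disc) * (M.scalarV π Q - ∑ s, M.init s * vOf ρ f s)
      = ∑ s, ∑ a, M.occ π s a * (M.bellman ρ f s a - f s a)
        + ∑ s, M.stateOcc π s * (vOf π f s - vOf ρ f s) := by
  rw [M.sum_occ_bellman_sub hπ, M.sum_occ_mul_reward hπ hQ]
  simp only [mul_sub, sum_sub_distrib]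
  ring

lemma init_le_stateOcc (hπ : IsPolicy π) (s : S) :
    (1 - M.disc) * M.init s ≤ M.stateOcc π s := by
  rw [M.stateOcc_eq hπ s, le_add_iff_nonneg_right]
  exact mul_nonneg M.disc_pos.le <| sum_nonneg fun s' _ => sum_nonneg fun a _ =>
    mul_nonneg (mul_nonneg (M.stateOcc_nonneg hπ s') (hπ.1 s' a)) (M.P_nonneg s' a s)

lemma sum_init_vOf_sub_scalarV_le (hπ : IsPolicy π) (Q f : S → A → ℝ) :
    ∑ s, M.init s * vOf π f s - M.scalarV π Q
      ≤ √((∑ s, ∑ a, M.occ π s a * (f s a - Q s a) ^ 2) / (1 - M.disc)) := by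
  set w : S × A → ℝ := fun p => M.init p.1 * π p.1 p.2
  set x : S × A → ℝ := fun p => f p.1 p.2 - Q p.1 p.2
  have hw : ∀ p, 0 ≤ w p := fun p => mul_nonneg (M.init_nonneg p.1) (hπ.1 p.1 p.2)
  have hw1 : ∑ p, w p = 1 := by
    simp_rw [w, Fintype.sum_prod_type, ← mul_sum, hπ.2, mul_one, M.init_sum]
  have hmean : ∑ s, M.init s * vOf π f s - M.scalarV π Q = ∑ p, w p * x p := by
    simp only [scalarV, vOf, w, x, Fintype.sum_prod_type, ← sum_sub_distrib, mul_sum, mul_sub,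
      mul_assoc]
  have hjensen : (∑ p, w p * x p) ^ 2 ≤ ∑ p, w p * x p ^ 2 := by
    simpa [hw1] using sum_sq_le_sum_mul_sum_of_sq_le_mul univ (fun p _ => hw p)
      (fun p _ => mul_nonneg (hw p) (sq_nonneg (x p))) fun p _ => le_of_eq (by ring)
  have hocc : (1 - M.disc) * ∑ p, w p * x p ^ 2
      ≤ ∑ s, ∑ a, M.occ π s a * (f s a - Q s a) ^ 2 := by
    rw [mul_sum, ← Fintype.sum_prod_type']
    refine sum_le_sum fun p _ => ?_
    rw [occ_eq_stateOcc_mul, ← mul_assoc, ← mul_assoc]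
    gcongr
    · exact hπ.1 p.1 p.2
    · exact M.init_le_stateOcc hπ p.1
  rw [hmean]
  refine (le_abs_self _).trans (Real.abs_le_sqrt (hjensen.trans ?_))
  rw [le_div_iff₀ M.one_sub_disc_pos, mul_comm]
  exact hocc

lemma scalarV_sub_scalarV_le {πe Qe : S → A → ℝ} (hπe : IsPolicy πe) (hQe : M.IsQ πe Qe)
    (hπ : IsPolicy π) (Q f : S → A → ℝ) :
    M.scalarV πe Qe - M.scalarV π Q
      ≤ (∑ s, ∑ a, M.occ πe s a * (M.bellman π f s a - f s a)
          + ∑ s, M.stateOcc πe s * (vOf πe f s - vOf π f s)) / (1 - M.disc)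
        + √((∑ s, ∑ a, M.occ π s a * (f s a - Q s a) ^ 2) / (1 - M.disc)) := by
  rw [← M.performance_difference hπe hQe, mul_div_cancel_left₀ _ M.one_sub_disc_pos.ne']
  linarith [M.sum_init_vOf_sub_scalarV_le hπ Q f]

lemma scalarV_sub_scalarV_le_of_transfer {πe Qe ν : S → A → ℝ} (hπe : IsPolicy πe)
    (hQe : M.IsQ πe Qe) (hπ : IsPolicy π) {Q f : S → A → ℝ} {Δon Δoff C : ℝ} (hC : 0 ≤ C)
    (hon : ∑ s, ∑ a, M.occ π s a * (f s a - Q s a) ^ 2 ≤ Δon)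
    (hoff : ∑ s, ∑ a, ν s a * (f s a - M.bellman π f s a) ^ 2 ≤ Δoff)
    (htransfer : ∑ s, ∑ a, M.occ πe s a * (M.bellman π f s a - f s a)
      ≤ C * √(∑ s, ∑ a, ν s a * (M.bellman π f s a - f s a) ^ 2)) :
    M.scalarV πe Qe - M.scalarV π Q
      ≤ √(Δon / (1 - M.disc)) + C * √Δoff / (1 - M.disc)
        + (∑ s, M.stateOcc πe s * (vOf πe f s - vOf π f s)) / (1 - M.disc) := by
  have hγ := M.one_sub_disc_pos
  have hresidual : ∑ s, ∑ a, M.occ πe s a * (M.bellman π f s a - f s a) ≤ C * √Δoff := by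
    simp_rw [← sub_sq_comm (f _ _)] at htransfer
    exact htransfer.trans (mul_le_mul_of_nonneg_left (Real.sqrt_le_sqrt hoff) hC)
  have hon' := Real.sqrt_le_sqrt (div_le_div_of_nonneg_right hon hγ.le)
  have := M.scalarV_sub_scalarV_le hπe hQe hπ Q f
  rw [add_div] at this
  linarith [div_le_div_of_nonneg_right hresidual hγ.le]

lemma sum_sum_stateOcc_mul_le (hπ : IsPolicy π) {ι : Type*} (I : Finset ι) {g : ι → S → ℝ}
    {R : ℝ} (hg : ∀ s, ∑ i ∈ I, g i s ≤ R) :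
    ∑ i ∈ I, ∑ s, M.stateOcc π s * g i s ≤ R := by
  rw [sum_comm]
  simp_rw [← mul_sum]
  calc _ ≤ ∑ s, M.stateOcc π s * R :=
        sum_le_sum fun s _ => mul_le_mul_of_nonneg_left (hg s) (M.stateOcc_nonneg hπ s)
    _ = R := by rw [← sum_mul, M.sum_stateOcc hπ, one_mul]

end Occupancy

end FinMDP

lemma hedge_bound_at_tuned_rate {c L T η : ℝ} (hc : 0 < c) (hL : 0 < L) (hT : 0 < T)
    (hη : η = c * √(L / T)) :
    (L / η + η * T * (1 / c) ^ 2) / c = 2 / c ^ 2 * √(L * T) := by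
  rw [hη, Real.sqrt_mul hL.le, Real.sqrt_div hL.le]
  field_simp
  rw [Real.sq_sqrt hL.le, Real.sq_sqrt hT.le]
  ring

theorem stmt15_general (M : FinMDP S A) (hA : 2 ≤ Fintype.card A) (T : ℕ)
    (hT : 4 * Real.log (Fintype.card A) ≤ (T : ℝ))
    (η : ℝ) (hη : η = (1 - M.disc) * Real.sqrt (Real.log (Fintype.card A) / T))
    (ν : S → A → ℝ)
    (f : ℕ → S → A → ℝ)
    (hfmem : ∀ t ∈ Finset.Icc 1 T, ∀ s a, f t s a ∈ Set.Icc 0 (1 / (1 - M.disc)))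
    (π : ℕ → S → A → ℝ)
    (hπ1 : ∀ s a, π 1 s a = 1 / Fintype.card A)
    (hupd : ∀ t, 1 ≤ t → t < T → ∀ s a,
      π (t + 1) s a =
        π t s a * Real.exp (η * f t s a) / ∑ a', π t s a' * Real.exp (η * f t s a'))
    (Q : ℕ → S → A → ℝ)
    (πe Qe : S → A → ℝ) (hπe : IsPolicy πe) (hQe : M.IsQ πe Qe)
    (Δon Δoff C : ℝ) (hC : 0 ≤ C)
    (hon : ∀ t ∈ Finset.Icc 1 T,
      ∑ s, ∑ a, M.occ (π t) s a * (f t s a - Q t s a) ^ 2 ≤ Δon)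
    (hoff : ∀ t ∈ Finset.Icc 1 T,
      ∑ s, ∑ a, ν s a * (f t s a - M.bellman (π t) (f t) s a) ^ 2 ≤ Δoff)
    (htransfer : ∀ t ∈ Finset.Icc 1 T,
      ∑ s, ∑ a, M.occ πe s a * (M.bellman (π t) (f t) s a - f t s a)
        ≤ C * Real.sqrt (∑ s, ∑ a, ν s a * (M.bellman (π t) (f t) s a - f t s a) ^ 2)) :
    ∑ t ∈ Finset.Icc 1 T, (M.scalarV πe Qe - M.scalarV (π t) (Q t))
      ≤ (T : ℝ) * Real.sqrt (Δon / (1 - M.disc))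
        + (C * T / (1 - M.disc)) * Real.sqrt Δoff
        + (2 / (1 - M.disc) ^ 2) * Real.sqrt (Real.log (Fintype.card A) * T) := by
  set L := Real.log (Fintype.card A)
  have hγ := M.one_sub_disc_pos
  have hL : 0 < L := Real.log_pos (by exact_mod_cast hA)
  have hTpos : (0 : ℝ) < T := by linarith
  have hηpos : 0 < η := hη ▸ mul_pos hγ (Real.sqrt_pos.2 (div_pos hL hTpos))
  have hηB : η * (1 / (1 - M.disc)) = √(L / T) := by rw [hη]; field_simp
  have hhedge : ∀ s, IsHedge η (fun t a => f t s a) T (fun t a => π t s a) := fun s =>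
    ⟨hπ1 s, fun t h1 h2 => hupd t h1 h2 s⟩
  have hpol : ∀ t ∈ Icc 1 T, IsPolicy (π t) := fun t ht =>
    ⟨fun s => (hhedge s).nonneg (mem_Icc.1 ht).1 (mem_Icc.1 ht).2,
      fun s => (hhedge s).sum_eq_one (mem_Icc.1 ht).1 (mem_Icc.1 ht).2⟩
  have hregret : ∀ s, ∑ t ∈ Icc 1 T, (vOf πe (f t) s - vOf (π t) (f t) s)
      ≤ L / η + η * T * (1 / (1 - M.disc)) ^ 2 := fun s =>
    (hhedge s).regret_le hηpos (hηB ▸ Real.sqrt_le_one.2 ((div_le_one hTpos).2 (by linarith)))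
      (fun t ht a => hfmem t ht s a) (hπe.1 s) (hπe.2 s)
  calc _ ≤ ∑ t ∈ Icc 1 T, (√(Δon / (1 - M.disc)) + C * √Δoff / (1 - M.disc)
        + (∑ s, M.stateOcc πe s * (vOf πe (f t) s - vOf (π t) (f t) s)) / (1 - M.disc)) :=
        sum_le_sum fun t ht => M.scalarV_sub_scalarV_le_of_transfer hπe hQe (hpol t ht) hC
          (hon t ht) (hoff t ht) (htransfer t ht)
    _ ≤ T * (√(Δon / (1 - M.disc)) + C * √Δoff / (1 - M.disc))
        + (L / η + η * T * (1 / (1 - M.disc)) ^ 2) / (1 - M.disc) := by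
        rw [sum_add_distrib, sum_const, Nat.card_Icc, add_tsub_cancel_right, nsmul_eq_mul,
          ← sum_div]
        gcongr
        exact M.sum_sum_stateOcc_mul_le hπe _ hregret
    _ = _ := by rw [hedge_bound_at_tuned_rate hγ hL hTpos hη]; ring

/-- Cumulative suboptimality of hybrid actor-critic under offline transfer
(deterministic form of the Bellman-complete case of Theorem 4.5). -/
theorem stmt15 (M : FinMDP S A) (hA : 2 ≤ Fintype.card A) (T : ℕ)
    (hT : 4 * Real.log (Fintype.card A) ≤ (T : ℝ))
    (η : ℝ) (hη : η = (1 - M.disc) * Real.sqrt (Real.log (Fintype.card A) / T))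
    (ν : S → A → ℝ) (hν0 : ∀ s a, 0 ≤ ν s a) (hν1 : ∑ s, ∑ a, ν s a = 1)
    (f : ℕ → S → A → ℝ)
    (hfmem : ∀ t ∈ Finset.Icc 1 T, ∀ s a, f t s a ∈ Set.Icc 0 (1 / (1 - M.disc)))
    (π : ℕ → S → A → ℝ)
    (hπ1 : ∀ s a, π 1 s a = 1 / Fintype.card A)
    (hupd : ∀ t, 1 ≤ t → t < T → ∀ s a,
      π (t + 1) s a =
        π t s a * Real.exp (η * f t s a) / ∑ a', π t s a' * Real.exp (η * f t s a'))
    (Q : ℕ → S → A → ℝ) (hQ : ∀ t ∈ Finset.Icc 1 T, M.IsQ (π t) (Q t))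
    (πe Qe : S → A → ℝ) (hπe : IsPolicy πe) (hQe : M.IsQ πe Qe)
    (Δon Δoff C : ℝ) (hC : 0 ≤ C)
    (hon : ∀ t ∈ Finset.Icc 1 T,
      ∑ s, ∑ a, M.occ (π t) s a * (f t s a - Q t s a) ^ 2 ≤ Δon)
    (hoff : ∀ t ∈ Finset.Icc 1 T,
      ∑ s, ∑ a, ν s a * (f t s a - M.bellman (π t) (f t) s a) ^ 2 ≤ Δoff)
    (htransfer : ∀ t ∈ Finset.Icc 1 T,
      ∑ s, ∑ a, M.occ πe s a * (M.bellman (π t) (f t) s a - f t s a)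
        ≤ C * Real.sqrt (∑ s, ∑ a, ν s a * (M.bellman (π t) (f t) s a - f t s a) ^ 2)) :
    ∑ t ∈ Finset.Icc 1 T, (M.scalarV πe Qe - M.scalarV (π t) (Q t))
      ≤ (T : ℝ) * Real.sqrt (Δon / (1 - M.disc))
        + (C * T / (1 - M.disc)) * Real.sqrt Δoff
        + (2 / (1 - M.disc) ^ 2) * Real.sqrt (Real.log (Fintype.card A) * T) :=
  stmt15_general M hA T hT η hη ν f hfmem π hπ1 hupd Q πe Qe hπe hQe Δon Δoff C hC hon hoff
    htransfer
end

section
/- Bellman residual of the compatible linear critic: Let π be a policy of a finite discounted MDP, ν a probability distribution on S×A, f : S×A → ℝ, w ∈ ℝ^d, and φ : S×A → ℝ^d with Σ_a π(a|s)·φ(s,a) = 0 for every s. Define g(s,a) = E_{a'∼π(·|s)}[f(s,a')] + ⟨w, φ(s,a)⟩. If E_{ν}[(⟨w, φ(s,a)⟩ − f(s,a) + E_{a'∼π(·|s)}[f(s,a')])²] ≤ Δ_w and E_{ν}[(f − T^π f)²] ≤ Δ_off, then E_{(s,a)∼ν}[(g(s,a) − (T^π g)(s,a))²] ≤ 2·Δ_w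 + 2·Δ_off. -/
/-!
The compatible critic `g` differs from `f`'s policy average by `⟨w, φ⟩`, which averages to zero
under `π` because `φ` is `π`-centered. Hence `g` and `f` have the same policy averages, so
`T^π g = T^π f`, and `g - T^π g` splits as the compatibility error plus the Bellman residual of
`f`; the bound follows from `(x + y)² ≤ 2x² + 2y²`.
-/

open Finset

variable {S A : Type*} [Fintype S] [Fintype A] [Nonempty S] [Nonempty A]

theorem sum_mul_inner_eq_zero_of_sum_smul_eq_zero {ι E : Type*} [NormedAddCommGroup E]
    [InnerProductSpace ℝ E] (s : Finset ι) (p : ι → ℝ) (φ : ι → E) (w : E)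
    (hφ : ∑ i ∈ s, p i • φ i = 0) :
    ∑ i ∈ s, p i * inner ℝ w (φ i) = 0 := by
  simp_rw [← real_inner_smul_right, ← inner_sum, hφ, inner_zero_right]

theorem sum_mul_add_sq_le {ι : Type*} (s : Finset ι) (c x y : ι → ℝ)
    (hc : ∀ i ∈ s, 0 ≤ c i) :
    ∑ i ∈ s, c i * (x i + y i) ^ 2
      ≤ 2 * ∑ i ∈ s, c i * x i ^ 2 + 2 * ∑ i ∈ s, c i * y i ^ 2 := by
  rw [mul_sum, mul_sum, ← sum_add_distrib]
  refine sum_le_sum fun i hi => ?_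
  linear_combination mul_le_mul_of_nonneg_left (add_sq_le (a := x i) (b := y i)) (hc i hi)

theorem FinMDP.bellman_congr {S A : Type*} [Fintype S] [Fintype A] (M : FinMDP S A)
    (π f g : S → A → ℝ) (h : ∀ s, ∑ a, π s a * g s a = ∑ a, π s a * f s a) :
    M.bellman π g = M.bellman π f := by
  ext s a
  simp only [FinMDP.bellman, h]

theorem stmt18_general {d : ℕ} (M : FinMDP S A) (π : S → A → ℝ) (hπ : IsPolicy π)
    (ν : S → A → ℝ) (hν0 : ∀ s a, 0 ≤ ν s a)
    (f : S → A → ℝ) (w : EuclideanSpace ℝ (Fin d)) (φ : S → A → EuclideanSpace ℝ (Fin d))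
    (hφ : ∀ s, ∑ a, π s a • φ s a = 0)
    (g : S → A → ℝ)
    (hg : ∀ s a, g s a = (∑ a', π s a' * f s a') + (inner ℝ w (φ s a) : ℝ))
    (Δw Δoff : ℝ)
    (h1 : ∑ s, ∑ a, ν s a *
        ((inner ℝ w (φ s a) : ℝ) - f s a + ∑ a', π s a' * f s a') ^ 2 ≤ Δw)
    (h2 : ∑ s, ∑ a, ν s a * (f s a - M.bellman π f s a) ^ 2 ≤ Δoff) :
    ∑ s, ∑ a, ν s a * (g s a - M.bellman π g s a) ^ 2 ≤ 2 * Δw + 2 * Δoff := by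
  have hbel : M.bellman π g = M.bellman π f := by
    refine M.bellman_congr π f g fun s => ?_
    simp only [hg, mul_add, sum_add_distrib, ← sum_mul, hπ.2 s, one_mul,
      sum_mul_inner_eq_zero_of_sum_smul_eq_zero _ _ _ w (hφ s), add_zero]
  have hsplit : ∀ s a, g s a - M.bellman π g s a
      = ((inner ℝ w (φ s a) : ℝ) - f s a + ∑ a', π s a' * f s a')
        + (f s a - M.bellman π f s a) := fun s a => by rw [hbel, hg]; ring
  calc ∑ s, ∑ a, ν s a * (g s a - M.bellman π g s a) ^ 2
      ≤ ∑ s, (2 * ∑ a, ν s a * ((inner ℝ w (φ s a) : ℝ) - f s a + ∑ a', π s a' * f s a') ^ 2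
          + 2 * ∑ a, ν s a * (f s a - M.bellman π f s a) ^ 2) := by
        simp only [hsplit]
        exact sum_le_sum fun s _ => sum_mul_add_sq_le _ _ _ _ fun a _ => hν0 s a
    _ ≤ 2 * Δw + 2 * Δoff := by
        rw [sum_add_distrib, ← mul_sum, ← mul_sum]
        linarith

/-- Bellman residual of the compatible linear critic. -/
theorem stmt18 {d : ℕ} (M : FinMDP S A) (π : S → A → ℝ) (hπ : IsPolicy π)
    (ν : S → A → ℝ) (hν0 : ∀ s a, 0 ≤ ν s a) (hν1 : ∑ s, ∑ a, ν s a = 1)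
    (f : S → A → ℝ) (w : EuclideanSpace ℝ (Fin d)) (φ : S → A → EuclideanSpace ℝ (Fin d))
    (hφ : ∀ s, ∑ a, π s a • φ s a = 0)
    (g : S → A → ℝ)
    (hg : ∀ s a, g s a = (∑ a', π s a' * f s a') + (inner ℝ w (φ s a) : ℝ))
    (Δw Δoff : ℝ)
    (h1 : ∑ s, ∑ a, ν s a *
        ((inner ℝ w (φ s a) : ℝ) - f s a + ∑ a', π s a' * f s a') ^ 2 ≤ Δw)
    (h2 : ∑ s, ∑ a, ν s a * (f s a - M.bellman π f s a) ^ 2 ≤ Δoff) :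
    ∑ s, ∑ a, ν s a * (g s a - M.bellman π g s a) ^ 2 ≤ 2 * Δw + 2 * Δoff :=
  stmt18_general M π hπ ν hν0 f w φ hφ g hg Δw Δoff h1 h2
end
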